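/- arXiv:2402.18245 — 9 statements merged into one kernel-verified Lean document; each statement's English description precedes it below -/
import Mathlib

section
/- Any finite family of subtrees of a tree has the Helly property: if the subtrees pairwise intersect, then they have a common vertex. -/
/-!
A connected vertex set of a tree contains the unique path between any two of its vertices. Given
three such sets meeting pairwise, pick a vertex in each pairwise intersection: the median of these
three vertices lies on all three paths between them, hence in all three sets. The general case
follows by induction, intersecting with one set at a time.
-/

open SimpleGraph

/-- A subtree model of `G` on a tree `T`: each vertex gets a nonempty connected
subtree, and subtrees of distinct vertices intersect iff the vertices are adjacent. -/
def IsSubtreeModel {V W : Type*} (G : SimpleGraph V) (T : SimpleGraph W) (S : V → Set W) : Prop :=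
  T.IsTree ∧ (∀ v : V, (T.induce (S v)).Connected) ∧
    ∀ u v : V, u ≠ v → ((S u ∩ S v).Nonempty ↔ G.Adj u v)

namespace SimpleGraph

variable {V : Type*} {G : SimpleGraph V}

/-- Unlike connectedness of `G.induce s`, this is preserved by intersections (`∅` qualifies); in a
tree the nonempty path-closed sets are exactly the vertex sets of subtrees. -/
def IsPathClosed (G : SimpleGraph V) (s : Set V) : Prop :=
  ∀ ⦃u v : V⦄ (p : G.Walk u v), p.IsPath → u ∈ s → v ∈ s → ∀ w ∈ p.support, w ∈ s

lemma isPathClosed_univ : G.IsPathClosed Set.univ :=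
  fun _ _ _ _ _ _ _ _ => Set.mem_univ _

lemma IsPathClosed.inter {s t : Set V} (hs : G.IsPathClosed s) (ht : G.IsPathClosed t) :
    G.IsPathClosed (s ∩ t) :=
  fun _ _ p hp hu hv w hw => ⟨hs p hp hu.1 hv.1 w hw, ht p hp hu.2 hv.2 w hw⟩

lemma IsAcyclic.support_subset_support_of_isPath (hG : G.IsAcyclic) {u v : V}
    {p : G.Walk u v} (hp : p.IsPath) (q : G.Walk u v) : p.support ⊆ q.support := by
  classical
  have hpq : p = q.bypass :=
    congrArg Subtype.val ((hG.subsingleton_path u v).elim ⟨p, hp⟩ ⟨_, q.bypass_isPath⟩)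
  exact hpq ▸ q.support_bypass_subset_support

lemma IsAcyclic.isPathClosed_of_connected_induce (hG : G.IsAcyclic) {s : Set V}
    (hs : (G.induce s).Connected) : G.IsPathClosed s := by
  intro u v p hp hu hv w hw
  obtain ⟨q⟩ := hs.preconnected ⟨u, hu⟩ ⟨v, hv⟩
  have hwq : w ∈ (q.map (Embedding.induce s).toHom).support :=
    hG.support_subset_support_of_isPath hp _ hw
  simp only [Walk.support_map, List.mem_map] at hwq
  obtain ⟨⟨w, hws⟩, -, rfl⟩ := hwq
  exact hws

/-- The median of `a`, `b`, `c`. -/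
lemma IsAcyclic.exists_mem_support_of_isPath (hG : G.IsAcyclic) {a b c : V}
    {p : G.Walk a b} {q : G.Walk c a} {r : G.Walk c b}
    (hp : p.IsPath) (hq : q.IsPath) (hr : r.IsPath) :
    ∃ m, m ∈ p.support ∧ m ∈ q.support ∧ m ∈ r.support := by
  classical
  have hcover : ∀ w ∈ p.support, w ∈ q.support ∨ w ∈ r.support := by
    intro w hw
    have := hG.support_subset_support_of_isPath hp (q.reverse.append r) hw
    simpa only [Walk.mem_support_append_iff, Walk.support_reverse, List.mem_reverse] using this
  by_cases hb : b ∈ q.support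
  · exact ⟨b, p.end_mem_support, hb, r.end_mem_support⟩
  obtain ⟨d, hd, hu, hv⟩ := p.exists_boundary_dart {w | w ∈ q.support} q.end_mem_support hb
  have hvr : d.snd ∈ r.support :=
    (hcover _ (p.dart_snd_mem_support_of_mem_darts hd)).resolve_left hv
  -- the path from `c` to `d.snd` along `r` must run through its neighbour `d.fst`
  have hur : d.fst ∈ (r.takeUntil _ hvr).support :=
    hG.mem_support_of_ne_mem_support_of_adj_of_isPath (hr.takeUntil hvr) (hq.takeUntil hu)
      d.adj.symm fun h => hv (q.support_takeUntil_subset_support hu h)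
  exact ⟨d.fst, p.dart_fst_mem_support_of_mem_darts hd, hu,
    r.support_takeUntil_subset_support hvr hur⟩

lemma IsTree.inter_inter_nonempty_of_isPathClosed (hG : G.IsTree) {s t u : Set V}
    (hs : G.IsPathClosed s) (ht : G.IsPathClosed t) (hu : G.IsPathClosed u)
    (hst : (s ∩ t).Nonempty) (hsu : (s ∩ u).Nonempty) (htu : (t ∩ u).Nonempty) :
    (s ∩ t ∩ u).Nonempty := by
  obtain ⟨c, hcs, hct⟩ := hst
  obtain ⟨b, hbs, hbu⟩ := hsu
  obtain ⟨a, hat, hau⟩ := htu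
  obtain ⟨p, hp, -⟩ := hG.existsUnique_path a b
  obtain ⟨q, hq, -⟩ := hG.existsUnique_path c a
  obtain ⟨r, hr, -⟩ := hG.existsUnique_path c b
  obtain ⟨m, hmp, hmq, hmr⟩ := hG.isAcyclic.exists_mem_support_of_isPath hp hq hr
  exact ⟨m, ⟨hs r hr hcs hbs m hmr, ht q hq hct hat m hmq⟩, hu p hp hau hbu m hmp⟩

/-- The set `A` makes the induction on `s` go through: the step replaces `A` by `A ∩ S j`, which
still meets every other `S i` by the case of three sets. -/
lemma IsTree.exists_mem_forall_mem_of_isPathClosed (hG : G.IsTree) {ι : Type*} {S : ι → Set V}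
    {s : Finset ι} (hS : ∀ i ∈ s, G.IsPathClosed (S i))
    (hpair : ∀ i ∈ s, ∀ j ∈ s, (S i ∩ S j).Nonempty) {A : Set V} (hA : G.IsPathClosed A)
    (hAne : A.Nonempty) (hAS : ∀ i ∈ s, (A ∩ S i).Nonempty) : ∃ x ∈ A, ∀ i ∈ s, x ∈ S i := by
  classical
  induction s using Finset.induction_on generalizing A with
  | empty => exact hAne.imp fun x hx => ⟨hx, by simp⟩
  | insert j s _ ih =>
    simp only [Finset.forall_mem_insert] at hS hpair hAS ⊢
    obtain ⟨x, ⟨hxA, hxj⟩, hxs⟩ := ih hS.2 (fun i hi k hk => hpair.2 i hi |>.2 k hk)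
      (hA.inter hS.1) hAS.1 fun i hi =>
        hG.inter_inter_nonempty_of_isPathClosed hA hS.1 (hS.2 i hi) hAS.1 (hAS.2 i hi)
          (hpair.1.2 i hi)
    exact ⟨x, hxA, hxj, hxs⟩

end SimpleGraph

theorem subtrees_helly_general {W ι : Type*} [Finite ι]
    (T : SimpleGraph W) (hT : T.IsTree) (S : ι → Set W)
    (hconn : ∀ i : ι, (T.induce (S i)).Connected)
    (hpair : ∀ i j : ι, (S i ∩ S j).Nonempty) :
    (⋂ i : ι, S i).Nonempty := by
  cases nonempty_fintype ι
  have := hT.connected.nonempty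
  obtain ⟨x, -, hx⟩ := hT.exists_mem_forall_mem_of_isPathClosed (s := Finset.univ)
    (fun i _ => hT.isAcyclic.isPathClosed_of_connected_induce (hconn i)) (fun i _ j _ => hpair i j)
    isPathClosed_univ Set.univ_nonempty fun i _ => by simpa using hpair i i
  exact ⟨x, Set.mem_iInter.2 fun i => hx i (Finset.mem_univ i)⟩

/-- Helly property of subtrees of a tree: pairwise intersecting subtrees of a finite tree
have a common vertex. -/
theorem subtrees_helly {W ι : Type*} [Fintype W] [Finite ι] [Nonempty ι]
    (T : SimpleGraph W) (hT : T.IsTree) (S : ι → Set W)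
    (hconn : ∀ i : ι, (T.induce (S i)).Connected)
    (hpair : ∀ i j : ι, (S i ∩ S j).Nonempty) :
    (⋂ i : ι, S i).Nonempty :=
  subtrees_helly_general T hT S hconn hpair
end

section
/- Let G be a graph with a subtree model (T, S), and let C, C' be two distinct maximal cliques of G. Then the clique subtrees S(C) = ∩_{v∈C} S_v and S(C') are nonempty and disjoint. -/
open SimpleGraph

/-- A maximal clique of `G`. -/
def IsMaxClique {V : Type*} (G : SimpleGraph V) (C : Set V) : Prop :=
  G.IsClique C ∧ ∀ D : Set V, G.IsClique D → C ⊆ D → C = D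

/-! Finitely many pairwise intersecting subtrees of a tree have a common vertex (Helly).
A subtree contains the unique tree path between any two of its vertices, so three pairwise
intersecting subtrees all contain the median of three witness points; the general case follows by
induction, replacing two subtrees by their intersection, again a subtree. Hence the clique subtree
of a maximal clique is nonempty, and a vertex common to `S(C)` and `S(C')` would make `C ∪ C'`
a clique, contradicting maximality. -/

namespace SimpleGraph

variable {W : Type*} {T : SimpleGraph W}

lemma exists_isPath_support_subset {A : Set W} (hA : (T.induce A).Preconnected)
    {x y : W} (hx : x ∈ A) (hy : y ∈ A) :
    ∃ p : T.Walk x y, p.IsPath ∧ {z | z ∈ p.support} ⊆ A := by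
  classical
  obtain ⟨q⟩ := hA ⟨x, hx⟩ ⟨y, hy⟩
  refine ⟨_, (q.map (Embedding.induce A).toHom).bypass_isPath, fun z hz => ?_⟩
  have hz' : z ∈ (q.map (Embedding.induce A).toHom).support :=
    Walk.support_bypass_subset_support _ hz
  rw [Walk.support_map] at hz'
  obtain ⟨⟨z, hzA⟩, -, rfl⟩ := List.mem_map.mp hz'
  exact hzA

lemma IsAcyclic.support_subset_of_isPath (hT : T.IsAcyclic) {A : Set W}
    (hA : (T.induce A).Preconnected) {x y : W} (hx : x ∈ A) (hy : y ∈ A)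
    {p : T.Walk x y} (hp : p.IsPath) : {z | z ∈ p.support} ⊆ A := by
  obtain ⟨q, hq, hqA⟩ := exists_isPath_support_subset hA hx hy
  have : p = q := congrArg Subtype.val ((hT.subsingleton_path x y).elim ⟨p, hp⟩ ⟨q, hq⟩)
  exact this ▸ hqA

lemma IsAcyclic.induce_inter_preconnected (hT : T.IsAcyclic) {A B : Set W}
    (hA : (T.induce A).Preconnected) (hB : (T.induce B).Preconnected) :
    (T.induce (A ∩ B)).Preconnected := by
  rintro ⟨x, hxA, hxB⟩ ⟨y, hyA, hyB⟩
  obtain ⟨p, hp, hpA⟩ := exists_isPath_support_subset hA hxA hyA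
  have hpB := hT.support_subset_of_isPath hB hxB hyB hp
  exact (p.connected_induce_support.preconnected ⟨x, p.start_mem_support⟩
    ⟨y, p.end_mem_support⟩).map (induceHomOfLE T (Set.subset_inter hpA hpB)).toHom

lemma Walk.IsPath.exists_median {a b c : W} {P : T.Walk a b} {Q : T.Walk b c}
    (hP : P.IsPath) (hQ : Q.IsPath) :
    ∃ m ∈ P.support, m ∈ Q.support ∧
      ∃ R : T.Walk a c, R.IsPath ∧ m ∈ R.support ∧ R.support ⊆ P.support ++ Q.support := by
  classical
  induction P with
  | nil => exact ⟨_, Walk.start_mem_support _, Q.start_mem_support, Q, hQ,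
      Q.start_mem_support, List.subset_append_right _ _⟩
  | @cons a a' b h P ih =>
    rw [Walk.cons_isPath_iff] at hP
    by_cases haQ : a ∈ Q.support
    · exact ⟨a, Walk.start_mem_support _, haQ, Q.dropUntil a haQ, hQ.dropUntil haQ,
        Walk.start_mem_support _,
        List.Subset.trans (Q.support_dropUntil_subset_support haQ) (List.subset_append_right _ _)⟩
    · obtain ⟨m, hmP, hmQ, R, hR, hmR, hRPQ⟩ := ih hP.1 hQ
      have haR : a ∉ R.support := fun haR =>
        (List.mem_append.mp (hRPQ haR)).elim hP.2 haQ
      refine ⟨m, by simp [hmP], hmQ, Walk.cons h R, hR.cons haR, by simp [hmR], ?_⟩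
      simp only [Walk.support_cons, List.cons_append]
      exact List.cons_subset_cons _ hRPQ

lemma IsAcyclic.helly_three (hT : T.IsAcyclic) {A B C : Set W}
    (hA : (T.induce A).Preconnected) (hB : (T.induce B).Preconnected)
    (hC : (T.induce C).Preconnected)
    (hAB : (A ∩ B).Nonempty) (hAC : (A ∩ C).Nonempty) (hBC : (B ∩ C).Nonempty) :
    (A ∩ B ∩ C).Nonempty := by
  obtain ⟨c, hcA, hcB⟩ := hAB
  obtain ⟨b, hbA, hbC⟩ := hAC
  obtain ⟨a, haB, haC⟩ := hBC
  obtain ⟨P, hP, -⟩ := exists_isPath_support_subset hC haC hbC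
  obtain ⟨Q, hQ, -⟩ := exists_isPath_support_subset hA hbA hcA
  obtain ⟨m, hmP, hmQ, R, hR, hmR, -⟩ := hP.exists_median hQ
  exact ⟨m, ⟨hT.support_subset_of_isPath hA hbA hcA hQ hmQ,
    hT.support_subset_of_isPath hB haB hcB hR hmR⟩,
    hT.support_subset_of_isPath hC haC hbC hP hmP⟩

lemma IsAcyclic.inter_biInter_nonempty (hT : T.IsAcyclic) {ι : Type*} (s : Finset ι)
    {f : ι → Set W} (hf : ∀ i ∈ s, (T.induce (f i)).Preconnected)
    (hpair : ∀ i ∈ s, ∀ j ∈ s, (f i ∩ f j).Nonempty) {B : Set W}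
    (hB : (T.induce B).Preconnected) (hBne : B.Nonempty) (hBf : ∀ i ∈ s, (B ∩ f i).Nonempty) :
    (B ∩ ⋂ i ∈ s, f i).Nonempty := by
  classical
  induction s using Finset.induction_on generalizing B with
  | empty => simpa using hBne
  | @insert j s _ ih =>
    simp only [Finset.mem_insert, forall_eq_or_imp] at hf hpair hBf
    have hrest := ih hf.2 (fun i hi k hk => hpair.2 i hi |>.2 k hk)
      (hT.induce_inter_preconnected hB hf.1) hBf.1
      (fun i hi => hT.helly_three hB hf.1 (hf.2 i hi) hBf.1 (hBf.2 i hi) (hpair.1.2 i hi))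
    rwa [Finset.set_biInter_insert, ← Set.inter_assoc]

theorem IsAcyclic.helly (hT : T.IsAcyclic) {ι : Type*} {s : Finset ι} (hs : s.Nonempty)
    {f : ι → Set W} (hf : ∀ i ∈ s, (T.induce (f i)).Preconnected)
    (hpair : ∀ i ∈ s, ∀ j ∈ s, (f i ∩ f j).Nonempty) :
    (⋂ i ∈ s, f i).Nonempty := by
  obtain ⟨i, hi⟩ := hs
  have h := hT.inter_biInter_nonempty s hf hpair (hf i hi)
    (by simpa using hpair i hi i hi) (hpair i hi)
  exact h.mono Set.inter_subset_right

end SimpleGraph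

section SubtreeModel

variable {V W : Type*} {G : SimpleGraph V} {T : SimpleGraph W} {S : V → Set W}

lemma IsSubtreeModel.biInter_nonempty_of_isClique (h : IsSubtreeModel G T S) {C : Set V}
    (hC : G.IsClique C) (hfin : C.Finite) (hne : C.Nonempty) : (⋂ v ∈ C, S v).Nonempty := by
  obtain ⟨hT, hS, hadj⟩ := h
  have hpair : ∀ u ∈ hfin.toFinset, ∀ v ∈ hfin.toFinset, (S u ∩ S v).Nonempty := by
    intro u hu v hv
    obtain rfl | huv := eq_or_ne u v
    · simpa [Set.Nonempty] using (hS u).nonempty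
    · exact (hadj u v huv).mpr (hC (by simpa using hu) (by simpa using hv) huv)
  simpa using hT.isAcyclic.helly (by simpa using hne) (fun v _ => (hS v).preconnected) hpair

lemma IsSubtreeModel.isClique_of_mem_biInter (h : IsSubtreeModel G T S) {D : Set V} {w : W}
    (hw : w ∈ ⋂ v ∈ D, S v) : G.IsClique D := by
  rw [Set.mem_iInter₂] at hw
  exact fun u hu v hv huv => (h.2.2 u v huv).mp ⟨w, hw u hu, hw v hv⟩

end SubtreeModel

lemma IsMaxClique.nonempty_of_ne {V : Type*} {G : SimpleGraph V} {C C' : Set V}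
    (hC : IsMaxClique G C) (hC' : G.IsClique C') (hne : C ≠ C') : C.Nonempty := by
  rw [Set.nonempty_iff_ne_empty]
  rintro rfl
  exact hne (hC.2 C' hC' (Set.empty_subset _))

theorem clique_subtrees_disjoint_general {V W : Type*} [Fintype V] (G : SimpleGraph V)
    (T : SimpleGraph W) (S : V → Set W) (h : IsSubtreeModel G T S)
    (C C' : Set V) (hC : IsMaxClique G C) (hC' : IsMaxClique G C') (hne : C ≠ C') :
    (⋂ v ∈ C, S v).Nonempty ∧ (⋂ v ∈ C', S v).Nonempty ∧
      (⋂ v ∈ C, S v) ∩ (⋂ v ∈ C', S v) = ∅ := by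
  refine ⟨h.biInter_nonempty_of_isClique hC.1 C.toFinite (hC.nonempty_of_ne hC'.1 hne),
    h.biInter_nonempty_of_isClique hC'.1 C'.toFinite (hC'.nonempty_of_ne hC.1 hne.symm), ?_⟩
  rw [Set.eq_empty_iff_forall_notMem]
  intro w hw
  rw [← Set.biInter_union] at hw
  have hunion := h.isClique_of_mem_biInter hw
  exact hne ((hC.2 _ hunion Set.subset_union_left).trans
    (hC'.2 _ hunion Set.subset_union_right).symm)

/-- In a subtree model, the clique subtrees of two distinct maximal cliques are
nonempty and disjoint. -/
theorem clique_subtrees_disjoint {V W : Type*} [Fintype V] [Fintype W] (G : SimpleGraph V)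
    (T : SimpleGraph W) (S : V → Set W) (h : IsSubtreeModel G T S)
    (C C' : Set V) (hC : IsMaxClique G C) (hC' : IsMaxClique G C') (hne : C ≠ C') :
    (⋂ v ∈ C, S v).Nonempty ∧ (⋂ v ∈ C', S v).Nonempty ∧
      (⋂ v ∈ C, S v) ∩ (⋂ v ∈ C', S v) = ∅ :=
  clique_subtrees_disjoint_general G T S h C C' hC hC' hne
end

section
/- Let G be a graph with a subtree model (T, S), let P be a path in G with endpoints u and v, and let x_u ∈ S_u and x_v ∈ S_v be arbitrary nodes. Then for every node x on the path in T from x_u to x_v, the cover V(x) contains at least one vertex of P. -/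
open SimpleGraph

/-!
Walking along `P` and passing from `S_a` to `S_b` through a common node at each edge `ab`
gives a walk from `x_u` to `x_v` in `T` that stays inside the covers of vertices of `P`.
Since `T` is a tree, the path `q` uses only nodes of every walk between its endpoints.
-/

namespace SimpleGraph

variable {V W : Type*} {G : SimpleGraph V} {T : SimpleGraph W}

lemma exists_walk_support_subset_of_connected_induce {s : Set W}
    (hs : (T.induce s).Connected) {a b : W} (ha : a ∈ s) (hb : b ∈ s) :
    ∃ p : T.Walk a b, ∀ x ∈ p.support, x ∈ s := by
  obtain ⟨p⟩ := hs ⟨a, ha⟩ ⟨b, hb⟩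
  refine ⟨p.map (Embedding.induce s).toHom, fun x hx => ?_⟩
  obtain ⟨⟨y, hy⟩, -, rfl⟩ := List.mem_map.mp ((Walk.support_map _ _) ▸ hx)
  exact hy

lemma IsAcyclic.support_subset_of_isPath_s7 (hT : T.IsAcyclic) {a b : W} {q : T.Walk a b}
    (hq : q.IsPath) (p : T.Walk a b) : q.support ⊆ p.support := by
  classical
  have hqp : (⟨q, hq⟩ : T.Path a b) = p.toPath := (hT.subsingleton_path a b).elim _ _
  calc q.support = (p.toPath : T.Walk a b).support := by rw [← hqp]
    _ ⊆ p.support := Walk.support_toPath_subset_support p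

lemma Walk.exists_walk_support_covered {S : V → Set W}
    (hS : ∀ v, (T.induce (S v)).Connected) (hadj : ∀ a b, G.Adj a b → (S a ∩ S b).Nonempty) :
    ∀ {u v : V} (P : G.Walk u v) {xu xv : W}, xu ∈ S u → xv ∈ S v →
      ∃ p : T.Walk xu xv, ∀ x ∈ p.support, ∃ w ∈ P.support, x ∈ S w
  | _, _, .nil (u := a), _, _, hxu, hxv => by
    obtain ⟨p, hp⟩ := exists_walk_support_subset_of_connected_induce (hS a) hxu hxv
    exact ⟨p, fun x hx => ⟨a, Walk.start_mem_support _, hp x hx⟩⟩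
  | _, _, .cons (u := a) hab P, _, _, hxu, hxv => by
    obtain ⟨y, hya, hyb⟩ := hadj _ _ hab
    obtain ⟨p₁, hp₁⟩ := exists_walk_support_subset_of_connected_induce (hS a) hxu hya
    obtain ⟨p₂, hp₂⟩ := exists_walk_support_covered hS hadj P hyb hxv
    refine ⟨p₁.append p₂, fun x hx => ?_⟩
    rcases (Walk.mem_support_append_iff _ _).mp hx with hx | hx
    · exact ⟨a, Walk.start_mem_support _, hp₁ x hx⟩
    · obtain ⟨w, hw, hxw⟩ := hp₂ x hx
      exact ⟨w, Walk.support_cons _ _ ▸ List.mem_cons_of_mem a hw, hxw⟩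

end SimpleGraph

theorem path_cover_intersect_general {V W : Type*} (G : SimpleGraph V)
    (T : SimpleGraph W) (S : V → Set W) (h : IsSubtreeModel G T S)
    (u v : V) (P : G.Walk u v)
    (xu xv : W) (hxu : xu ∈ S u) (hxv : xv ∈ S v)
    (q : T.Walk xu xv) (hq : q.IsPath) :
    ∀ x ∈ q.support, ∃ w ∈ P.support, x ∈ S w := by
  obtain ⟨hT, hS, hinter⟩ := h
  obtain ⟨p, hp⟩ := P.exists_walk_support_covered hS
    (fun a b hab => (hinter a b hab.ne).mpr hab) hxu hxv
  exact fun x hx => hp x (hT.isAcyclic.support_subset_of_isPath_s7 hq p hx)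

/-- Let `P` be a path in `G` from `u` to `v`, and let `x_u ∈ S_u`, `x_v ∈ S_v`. Then every
node on the tree path from `x_u` to `x_v` has a vertex of `P` in its cover. -/
theorem path_cover_intersect {V W : Type*} [Fintype V] [Fintype W] (G : SimpleGraph V)
    (T : SimpleGraph W) (S : V → Set W) (h : IsSubtreeModel G T S)
    (u v : V) (P : G.Walk u v) (hP : P.IsPath)
    (xu xv : W) (hxu : xu ∈ S u) (hxv : xv ∈ S v)
    (q : T.Walk xu xv) (hq : q.IsPath) :
    ∀ x ∈ q.support, ∃ w ∈ P.support, x ∈ S w :=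
  path_cover_intersect_general G T S h u v P xu xv hxu hxv q hq
end

section
/- Let G be a graph with a subtree model (T,S) and let C, C', C'' be three distinct maximal cliques of G. If the clique subtree S(C') intersects the connecting path p(S(C), S(C'')) in T, then C' is a separator of G, i.e., there exist vertices c ∈ C \ (C' ∪ C'') and c'' ∈ C'' \ (C ∪ C') such that every path in G from c to c'' contains a vertex of C'. -/
open SimpleGraph

/-!
The point `x` of `S(C')` on the connecting path `q` is the key. A vertex whose subtree contains
`x` lies in `C'` by maximality. If every vertex of `C \ C'` were in `C''`, its subtree would
contain `a` and `b`, hence the whole `T`-path `q` and so `x`; then `C ∪ C'` would be a clique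
and `C = C'`. This gives `c`, and symmetrically `c''`. Finally, the subtrees along a `G`-walk
from `c` to `c''` chain together into a `T`-walk from `a` to `b`. In a tree such a walk passes
through `x`, so one of these subtrees contains `x` and its vertex lies in `C'`.
-/

namespace SimpleGraph

variable {W : Type*} {T : SimpleGraph W}

lemma exists_walk_support_subset_of_induce_preconnected {s : Set W}
    (hs : (T.induce s).Preconnected) {u v : W} (hu : u ∈ s) (hv : v ∈ s) :
    ∃ r : T.Walk u v, ∀ y ∈ r.support, y ∈ s := by
  obtain ⟨p⟩ := hs ⟨u, hu⟩ ⟨v, hv⟩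
  refine ⟨p.map (Embedding.induce s).toHom, fun y hy => ?_⟩
  obtain ⟨z, -, rfl⟩ := List.mem_map.mp ((Walk.support_map _ p) ▸ hy)
  exact z.2

lemma IsAcyclic.support_subset_support_of_isPath_s8 (hT : T.IsAcyclic) {a b : W}
    {q : T.Walk a b} (hq : q.IsPath) (r : T.Walk a b) : q.support ⊆ r.support := by
  classical
  have hqr : q = r.bypass :=
    congrArg Subtype.val ((hT.subsingleton_path a b).elim ⟨q, hq⟩ ⟨r.bypass, r.bypass_isPath⟩)
  exact hqr ▸ r.support_bypass_subset_support

lemma IsAcyclic.support_subset_of_induce_preconnected (hT : T.IsAcyclic) {s : Set W}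
    (hs : (T.induce s).Preconnected) {a b : W} (ha : a ∈ s) (hb : b ∈ s)
    {q : T.Walk a b} (hq : q.IsPath) : ∀ x ∈ q.support, x ∈ s := by
  obtain ⟨r, hr⟩ := exists_walk_support_subset_of_induce_preconnected hs ha hb
  exact fun x hx => hr x (hT.support_subset_support_of_isPath_s8 hq r hx)

end SimpleGraph

section MaxClique

variable {V : Type*} {G : SimpleGraph V} {C D : Set V}

lemma IsMaxClique.eq_of_isClique_union (hC : IsMaxClique G C) (hD : IsMaxClique G D)
    (hCD : G.IsClique (C ∪ D)) : C = D :=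
  (hC.2 _ hCD Set.subset_union_left).trans (hD.2 _ hCD Set.subset_union_right).symm

lemma IsMaxClique.mem_of_isClique_insert (hC : IsMaxClique G C) {w : V}
    (hw : G.IsClique (insert w C)) : w ∈ C := by
  rw [hC.2 _ hw (Set.subset_insert w C)]
  exact Set.mem_insert w C

end MaxClique

namespace IsSubtreeModel

variable {V W : Type*} {G : SimpleGraph V} {T : SimpleGraph W} {S : V → Set W}

lemma isClique_of_mem_iInter (h : IsSubtreeModel G T S) {D : Set V} {y : W}
    (hy : y ∈ ⋂ v ∈ D, S v) : G.IsClique D := by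
  rw [Set.mem_iInter₂] at hy
  exact fun u hu v hv huv => (h.2.2 u v huv).mp ⟨y, hy u hu, hy v hv⟩

lemma mem_of_mem_iInter (h : IsSubtreeModel G T S) {C : Set V} (hC : IsMaxClique G C)
    {y : W} (hy : y ∈ ⋂ v ∈ C, S v) {w : V} (hw : y ∈ S w) : w ∈ C := by
  refine hC.mem_of_isClique_insert (h.isClique_of_mem_iInter (y := y) ?_)
  rw [Set.mem_iInter₂] at hy ⊢
  rintro v (rfl | hv)
  exacts [hw, hy v hv]

lemma exists_walk_support_subset (h : IsSubtreeModel G T S) {A : Set W} {u w : V}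
    (p : G.Walk u w) (hp : ∀ v ∈ p.support, S v ⊆ A) {y y' : W} (hy : y ∈ S u)
    (hy' : y' ∈ S w) : ∃ r : T.Walk y y', ∀ z ∈ r.support, z ∈ A := by
  induction p generalizing y with
  | nil =>
    obtain ⟨r, hr⟩ :=
      exists_walk_support_subset_of_induce_preconnected (h.2.1 _).preconnected hy hy'
    exact ⟨r, fun z hz => hp _ (Walk.start_mem_support _) (hr z hz)⟩
  | @cons u v _ huv p ih =>
    obtain ⟨z, hzu, hzv⟩ := (h.2.2 u v huv.ne).mpr huv
    obtain ⟨r₁, hr₁⟩ :=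
      exists_walk_support_subset_of_induce_preconnected (h.2.1 u).preconnected hy hzu
    obtain ⟨r₂, hr₂⟩ := ih (fun v hv => hp v (List.mem_cons_of_mem _ hv)) hzv hy'
    refine ⟨r₁.append r₂, fun z hz => ?_⟩
    rcases (Walk.mem_support_append_iff r₁ r₂).mp hz with hz | hz
    exacts [hp u (Walk.start_mem_support _) (hr₁ z hz), hr₂ z hz]

lemma exists_mem_support_of_forall_mem_support (h : IsSubtreeModel G T S) {u w : V}
    (p : G.Walk u w) {x y y' : W} (hy : y ∈ S u) (hy' : y' ∈ S w)
    (hx : ∀ r : T.Walk y y', x ∈ r.support) : ∃ v ∈ p.support, x ∈ S v := by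
  by_contra! hp
  obtain ⟨r, hr⟩ := h.exists_walk_support_subset (A := {x}ᶜ) p
    (fun v hv z hz hzx => hp v hv (hzx ▸ hz)) hy hy'
  exact hr x (hx r) rfl

lemma exists_mem_not_mem_not_mem (h : IsSubtreeModel G T S) {C C' C'' : Set V}
    (hC : IsMaxClique G C) (hC' : IsMaxClique G C') (hne : C ≠ C') {a b x : W}
    (ha : a ∈ ⋂ v ∈ C, S v) (hb : b ∈ ⋂ v ∈ C'', S v) (hx : x ∈ ⋂ v ∈ C', S v)
    (hbetween : ∀ v, a ∈ S v → b ∈ S v → x ∈ S v) : ∃ c ∈ C, c ∉ C' ∧ c ∉ C'' := by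
  by_contra! hcon
  refine hne (hC.eq_of_isClique_union hC' (h.isClique_of_mem_iInter (y := x) ?_))
  rw [Set.mem_iInter₂] at ha hb hx ⊢
  rintro v (hv | hv)
  · by_cases hvC' : v ∈ C'
    · exact hx v hvC'
    · exact hbetween v (ha v hv) (hb v (hcon v hv hvC'))
  · exact hx v hv

end IsSubtreeModel

theorem clique_subtree_on_connecting_path_separator_general {V W : Type*}
    (G : SimpleGraph V) (T : SimpleGraph W) (S : V → Set W) (h : IsSubtreeModel G T S)
    (C C' C'' : Set V) (hC : IsMaxClique G C) (hC' : IsMaxClique G C')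
    (hC'' : IsMaxClique G C'')
    (h1 : C ≠ C') (h2 : C' ≠ C'')
    (a b : W) (q : T.Walk a b) (hq : q.IsPath)
    (ha : a ∈ ⋂ v ∈ C, S v) (hb : b ∈ ⋂ v ∈ C'', S v)
    (hint : ∃ x ∈ q.support, x ∈ ⋂ v ∈ C', S v) :
    ∃ c ∈ C \ (C' ∪ C''), ∃ c'' ∈ C'' \ (C ∪ C'),
      ∀ p : G.Walk c c'', ∃ w ∈ p.support, w ∈ C' := by
  obtain ⟨x, hxq, hxC'⟩ := hint
  have hbetween : ∀ v, a ∈ S v → b ∈ S v → x ∈ S v := fun v hav hbv =>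
    h.1.isAcyclic.support_subset_of_induce_preconnected (h.2.1 v).preconnected hav hbv hq x hxq
  obtain ⟨c, hcC, hcC', hcC''⟩ := h.exists_mem_not_mem_not_mem hC hC' h1 ha hb hxC' hbetween
  obtain ⟨c'', hc''C'', hc''C', hc''C⟩ := h.exists_mem_not_mem_not_mem hC'' hC' h2.symm hb ha
    hxC' fun v hbv hav => hbetween v hav hbv
  refine ⟨c, ⟨hcC, by simp [hcC', hcC'']⟩, c'', ⟨hc''C'', by simp [hc''C, hc''C']⟩, fun p => ?_⟩
  obtain ⟨w, hw, hxw⟩ := h.exists_mem_support_of_forall_mem_support p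
    (Set.mem_iInter₂.mp ha c hcC) (Set.mem_iInter₂.mp hb c'' hc''C'')
    fun r => h.1.isAcyclic.support_subset_support_of_isPath_s8 hq r hxq
  exact ⟨w, hw, h.mem_of_mem_iInter hC' hxC' hxw⟩

/-- If the clique subtree of a maximal clique `C'` meets the connecting path between the
clique subtrees of two other distinct maximal cliques `C` and `C''`, then `C'` separates
some `c ∈ C \\ (C' ∪ C'')` from some `c'' ∈ C'' \\ (C ∪ C')`. Here the connecting path is
a path `q` in `T` from a node `a` of `S(C)` to a node `b` of `S(C'')` meeting `S(C)` only in
`a` and `S(C'')` only in `b`. -/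
theorem clique_subtree_on_connecting_path_separator {V W : Type*} [Fintype V] [Fintype W]
    (G : SimpleGraph V) (T : SimpleGraph W) (S : V → Set W) (h : IsSubtreeModel G T S)
    (C C' C'' : Set V) (hC : IsMaxClique G C) (hC' : IsMaxClique G C')
    (hC'' : IsMaxClique G C'')
    (h1 : C ≠ C') (h2 : C' ≠ C'') (h3 : C ≠ C'')
    (a b : W) (q : T.Walk a b) (hq : q.IsPath)
    (ha : a ∈ ⋂ v ∈ C, S v) (hb : b ∈ ⋂ v ∈ C'', S v)
    (hmin : ∀ x ∈ q.support, (x ∈ ⋂ v ∈ C, S v → x = a) ∧ (x ∈ ⋂ v ∈ C'', S v → x = b))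
    (hint : ∃ x ∈ q.support, x ∈ ⋂ v ∈ C', S v) :
    ∃ c ∈ C \ (C' ∪ C''), ∃ c'' ∈ C'' \ (C ∪ C'),
      ∀ p : G.Walk c c'', ∃ w ∈ p.support, w ∈ C' :=
  clique_subtree_on_connecting_path_separator_general G T S h C C' C'' hC hC' hC'' h1 h2 a b q hq ha
    hb hint
end

section
/- If a graph G admits a k-leaf root, then G admits a radial subtree model in which every subtree has radius at most k. (Concretely: subdivide every edge of the k-leaf root once and take each subtree to be the ball of radius k centered at the leaf corresponding to each vertex.) -/
open SimpleGraph

/-- A radial subtree model: a subtree model whose subtrees are balls with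
centers `c v` and radii `r v`. -/
def IsRSModel {V W : Type*} (G : SimpleGraph V) (T : SimpleGraph W) (c : V → W) (r : V → ℕ) : Prop :=
  IsSubtreeModel G T (fun v => {x | T.dist x (c v) ≤ r v})

/-- A leaf of a tree: a vertex with exactly one neighbor. -/
def IsLeafNode {W : Type*} (T : SimpleGraph W) (x : W) : Prop := ∃! y, T.Adj x y

/-- A `k`-leaf root of `G`: a tree `T` with a bijection `τ` from `V(G)` onto the
leaves of `T` such that distinct vertices are adjacent iff their leaves are at
distance at most `k` in `T`. -/
def IsLeafRoot {V W : Type*} (G : SimpleGraph V) (T : SimpleGraph W) (τ : V → W) (k : ℕ) : Prop :=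
  T.IsTree ∧ Function.Injective τ ∧ (∀ v : V, IsLeafNode T (τ v)) ∧
    (∀ x : W, IsLeafNode T x → ∃ v : V, τ v = x) ∧
    ∀ u v : V, u ≠ v → (G.Adj u v ↔ T.dist (τ u) (τ v) ≤ k)

/-!
Subdividing every edge of a tree once gives a tree (it has `|W| + |E|` vertices and `2|E|` edges)
in which the distance between original vertices doubles. In a connected graph every ball induces a
connected subgraph, and the balls of radii `r` and `s` around `x` and `y` meet iff
`dist x y ≤ r + s`. So in the subdivided leaf root the balls of radius `k` around the leaves of `u`
and `v` meet iff the leaves are at distance at most `k` in the original tree, i.e. iff `uv ∈ E(G)`.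
-/

namespace SimpleGraph

variable {V V' : Type*} {G : SimpleGraph V} {G' : SimpleGraph V'}

lemma Walk.le_add_length_of_forall_adj {f : V → ℕ} (hf : ∀ u v, G.Adj u v → f u ≤ f v + 1)
    {u v : V} (p : G.Walk u v) : f u ≤ f v + p.length := by
  induction p with
  | nil => simp
  | cons h _ ih => have := hf _ _ h; simp only [Walk.length_cons]; omega

lemma Reachable.le_add_dist_of_forall_adj {f : V → ℕ} (hf : ∀ u v, G.Adj u v → f u ≤ f v + 1)
    {u v : V} (h : G.Reachable u v) : f u ≤ f v + G.dist u v := by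
  obtain ⟨p, hp⟩ := h.exists_walk_length_eq_dist
  exact hp ▸ p.le_add_length_of_forall_adj hf

lemma Reachable.dist_map_le (f : G →g G') {u v : V} (h : G.Reachable u v) :
    G'.dist (f u) (f v) ≤ G.dist u v := by
  obtain ⟨p, hp⟩ := h.exists_walk_length_eq_dist
  simpa [hp] using dist_le (p.map f)

lemma Iso.dist_map (φ : G ≃g G') (u v : V) : G'.dist (φ u) (φ v) = G.dist u v := by
  by_cases h : G.Reachable u v
  · refine le_antisymm (h.dist_map_le φ.toHom) ?_
    simpa using (Iso.reachable_iff.mpr h : G'.Reachable (φ u) (φ v)).dist_map_le φ.symm.toHom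
  · rw [dist_eq_zero_of_not_reachable h, dist_eq_zero_of_not_reachable (mt Iso.reachable_iff.mp h)]

lemma Connected.connected_induce_setOf_dist_le (hG : G.Connected) (c : V) (r : ℕ) :
    (G.induce {x | G.dist x c ≤ r}).Connected := by
  classical
  refine induce_connected_of_patches c (by simp) fun {v} hv => ?_
  obtain ⟨p, hp⟩ := hG.exists_walk_length_eq_dist v c
  have hsupp : {x | x ∈ p.support} ⊆ {x | G.dist x c ≤ r} := fun x hx =>
    calc G.dist x c ≤ (p.dropUntil x hx).length := dist_le _
      _ ≤ p.length := p.length_dropUntil_le_length hx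
      _ ≤ r := hp ▸ hv
  exact ⟨_, hsupp, p.end_mem_support, p.start_mem_support,
    p.connected_induce_support.preconnected _ _⟩

lemma Connected.inter_setOf_dist_le_nonempty_iff (hG : G.Connected) (x y : V) (r s : ℕ) :
    ({z | G.dist z x ≤ r} ∩ {z | G.dist z y ≤ s}).Nonempty ↔ G.dist x y ≤ r + s := by
  constructor
  · rintro ⟨z, hzx, hzy⟩
    calc G.dist x y ≤ G.dist x z + G.dist z y := hG.dist_triangle
      _ ≤ r + s := add_le_add (dist_comm ▸ hzx) hzy
  · intro hxy
    obtain ⟨p, hp⟩ := hG.exists_walk_length_eq_dist x y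
    refine ⟨p.getVert r, ?_, ?_⟩
    · rw [Set.mem_ofPred_eq, dist_comm]
      exact (dist_le (p.take r)).trans (by simp [Walk.take_length])
    · exact (dist_le (p.drop r)).trans (by simp only [Walk.drop_length]; omega)

variable {W : Type*} {T : SimpleGraph W}

variable (T) in
def subdivision : SimpleGraph (W ⊕ T.edgeSet) where
  Adj
    | .inl a, .inr e | .inr e, .inl a => a ∈ (e : Sym2 W)
    | _, _ => False
  symm := ⟨by rintro (a | e) (b | f) h <;> exact h⟩
  loopless := ⟨by rintro (a | e) h <;> exact h⟩

@[simp]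
lemma subdivision_adj_inl_inr {a : W} {e : T.edgeSet} :
    T.subdivision.Adj (.inl a) (.inr e) ↔ a ∈ (e : Sym2 W) := .rfl

@[simp]
lemma subdivision_adj_inr_inl {a : W} {e : T.edgeSet} :
    T.subdivision.Adj (.inr e) (.inl a) ↔ a ∈ (e : Sym2 W) := .rfl

@[simp]
lemma not_subdivision_adj_inl_inl {a b : W} : ¬T.subdivision.Adj (.inl a) (.inl b) := id

@[simp]
lemma not_subdivision_adj_inr_inr {e f : T.edgeSet} : ¬T.subdivision.Adj (.inr e) (.inr f) := id

def Walk.subdivide : {x y : W} → T.Walk x y → T.subdivision.Walk (.inl x) (.inl y)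
  | _, _, .nil => .nil
  | _, _, .cons (v := b) h p =>
    .cons (subdivision_adj_inl_inr.mpr (Sym2.mem_mk_left _ b) : T.subdivision.Adj _
        (.inr ⟨_, T.mem_edgeSet.mpr h⟩))
      (.cons (subdivision_adj_inr_inl.mpr (Sym2.mem_mk_right _ b)) p.subdivide)

@[simp]
lemma Walk.length_subdivide {x y : W} (p : T.Walk x y) : p.subdivide.length = 2 * p.length := by
  induction p with
  | nil => rfl
  | cons _ _ ih => simp only [subdivide, length_cons, ih]; ring

lemma Connected.subdivision (hT : T.Connected) : T.subdivision.Connected := by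
  have hreach : ∀ z, ∃ x : W, T.subdivision.Reachable z (.inl x) := by
    rintro (a | e)
    · exact ⟨a, .rfl⟩
    · exact ⟨_, (subdivision_adj_inr_inl.mpr (Sym2.out_fst_mem e.1)).reachable⟩
  refine (connected_iff _).mpr ⟨fun u v => ?_, ⟨.inl hT.nonempty.some⟩⟩
  obtain ⟨x, hx⟩ := hreach u
  obtain ⟨y, hy⟩ := hreach v
  obtain ⟨p⟩ := hT.preconnected x y
  exact (hx.trans ⟨p.subdivide⟩).trans hy.symm

lemma Connected.dist_subdivision (hT : T.Connected) (x y : W) :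
    T.subdivision.dist (.inl x) (.inl y) = 2 * T.dist x y := by
  refine le_antisymm ?_ ?_
  · obtain ⟨p, hp⟩ := hT.exists_walk_length_eq_dist x y
    simpa [hp] using dist_le p.subdivide
  -- Twice the distance to `y`, extended to a subdivision vertex by the sum over both ends of its
  -- edge, changes by at most one along each edge of the subdivision.
  let f : W ⊕ T.edgeSet → ℕ
    | .inl a => 2 * T.dist a y
    | .inr e => Sym2.lift ⟨fun a b => T.dist a y + T.dist b y, fun _ _ => add_comm _ _⟩ e.1
  have hf_mem : ∀ (a : W) (e : T.edgeSet), a ∈ (e : Sym2 W) →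
      f (.inl a) ≤ f (.inr e) + 1 ∧ f (.inr e) ≤ f (.inl a) + 1 := by
    rintro a ⟨e, he⟩ ha
    obtain ⟨b, rfl⟩ := Sym2.mem_iff_exists.mp ha
    have := (T.mem_edgeSet.mp he).diff_dist_adj (u := y)
    simp only [f, Sym2.lift_mk, dist_comm (u := a) (v := y), dist_comm (u := b) (v := y)]
    omega
  have hf : ∀ u v, T.subdivision.Adj u v → f u ≤ f v + 1 := by
    rintro (a | e) (b | e') h <;> simp_all
  simpa [f] using (hT.subdivision.preconnected (.inl x) (.inl y)).le_add_dist_of_forall_adj hf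

lemma bijective_dart_subdivision_edgeSet :
    Function.Bijective fun d : T.Dart => (⟨s(.inl d.fst, .inr ⟨d.edge, d.edge_mem⟩),
      subdivision_adj_inl_inr.mpr (Sym2.mem_mk_left _ _)⟩ : T.subdivision.edgeSet) := by
  refine ⟨fun d d' h => ?_, ?_⟩
  · have h := congrArg Subtype.val h
    simp only [Sym2.eq_iff, Sum.inl.injEq, Sum.inr.injEq, Subtype.mk.injEq, reduceCtorEq,
      and_false, or_false] at h
    obtain ⟨hfst, hedge⟩ := h
    change s(d.fst, d.snd) = s(d'.fst, d'.snd) at hedge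
    rw [hfst, Sym2.congr_right] at hedge
    exact Dart.ext _ _ (Prod.ext hfst hedge)
  · rintro ⟨z, hz⟩
    induction z using Sym2.ind with | _ u v => ?_
    rcases u with a | ⟨e, he⟩ <;> rcases v with b | ⟨e', he'⟩ <;> simp at hz
    · obtain ⟨b, rfl⟩ := Sym2.mem_iff_exists.mp hz
      exact ⟨⟨(a, b), T.mem_edgeSet.mp he'⟩, rfl⟩
    · obtain ⟨a, rfl⟩ := Sym2.mem_iff_exists.mp hz
      exact ⟨⟨(b, a), T.mem_edgeSet.mp he⟩, Subtype.ext Sym2.eq_swap⟩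

lemma card_subdivision_edgeSet [Finite W] :
    Nat.card T.subdivision.edgeSet = 2 * Nat.card T.edgeSet := by
  classical
  have := Fintype.ofFinite W
  rw [← Nat.card_congr (Equiv.ofBijective _ bijective_dart_subdivision_edgeSet),
    Nat.card_eq_fintype_card, dart_card_eq_twice_card_edges, edgeFinset_card,
    Nat.card_eq_fintype_card]

lemma IsTree.subdivision [Finite W] (hT : T.IsTree) : T.subdivision.IsTree := by
  rw [isTree_iff_connected_and_card] at hT ⊢
  refine ⟨hT.1.subdivision, ?_⟩
  rw [card_subdivision_edgeSet, Nat.card_sum, ← hT.2]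
  ring

end SimpleGraph

lemma isRSModel_subdivision {V W : Type*} [Finite W] {G : SimpleGraph V} {T : SimpleGraph W}
    (hT : T.IsTree) {τ : V → W} {k : ℕ}
    (hG : ∀ u v, u ≠ v → (G.Adj u v ↔ T.dist (τ u) (τ v) ≤ k)) :
    IsRSModel G T.subdivision (fun v => .inl (τ v)) (fun _ => k) := by
  have hS := hT.connected.subdivision
  refine ⟨hT.subdivision, fun v => hS.connected_induce_setOf_dist_le _ k, fun u v huv => ?_⟩
  rw [hS.inter_setOf_dist_le_nonempty_iff, hT.connected.dist_subdivision, hG u v huv]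
  beta_reduce
  omega

theorem leafRoot_to_RSModel_general {V W : Type*} [Fintype W] (G : SimpleGraph V)
    (T : SimpleGraph W) (τ : V → W) (k : ℕ) (h : IsLeafRoot G T τ k) :
    ∃ (W' : Type) (_ : Fintype W') (T' : SimpleGraph W') (c : V → W') (r : V → ℕ),
      IsRSModel G T' c r ∧ ∀ v : V, r v ≤ k := by
  obtain ⟨hT, -, -, -, hG⟩ := h
  -- The conclusion asks for a vertex type in `Type`, so first move `T` to `Fin n`.
  let σ := Fintype.equivFin W
  let φ := Iso.map σ T
  have hG' : ∀ u v, u ≠ v → (G.Adj u v ↔ (T.map σ).dist (φ (τ u)) (φ (τ v)) ≤ k) := by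
    simpa only [φ.dist_map] using hG
  exact ⟨_, Fintype.ofFinite _, _, _, _, isRSModel_subdivision (φ.isTree_iff.mp hT) hG',
    fun _ => le_rfl⟩

/-- If `G` admits a `k`-leaf root, then `G` admits a radial subtree model in which every
subtree has radius at most `k`. -/
theorem leafRoot_to_RSModel {V W : Type*} [Fintype V] [Fintype W] (G : SimpleGraph V)
    (T : SimpleGraph W) (τ : V → W) (k : ℕ) (h : IsLeafRoot G T τ k) :
    ∃ (W' : Type) (_ : Fintype W') (T' : SimpleGraph W') (c : V → W') (r : V → ℕ),
      IsRSModel G T' c r ∧ ∀ v : V, r v ≤ k :=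
  leafRoot_to_RSModel_general G T τ k h
end

section
/- Let T be a tree, m a node of T, and S a ball in T with center c and radius r. Suppose x and y are nodes in different components of T − m, with x ∈ S and y ∉ S, and c lies in the component of T − m containing y or c = m. Then dist(m, y) > dist(m, x). -/
open SimpleGraph

lemma dist_eq_of_sep {W : Type*} (T : SimpleGraph W) (hconn : T.Connected)
    (m x c : W) (hsep : ∀ p : T.Walk x c, m ∈ p.support) :
    T.dist x c = T.dist x m + T.dist m c := by
  classical
  refine le_antisymm (hconn.dist_triangle) ?_
  obtain ⟨p, hp⟩ := hconn.exists_walk_length_eq_dist x c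
  have hm := hsep p
  calc T.dist x m + T.dist m c
      ≤ (p.takeUntil m hm).length + (p.dropUntil m hm).length :=
        Nat.add_le_add (SimpleGraph.dist_le _) (SimpleGraph.dist_le _)
    _ = p.length := by
        rw [← SimpleGraph.Walk.length_append, SimpleGraph.Walk.take_spec]
    _ = T.dist x c := hp

/-- Key distance comparison: if `m` separates `x` and `y` in the tree `T`, a ball centered
at `c` contains `x` but not `y`, and `c` lies in the component of `T - m` containing `y`
(or `c = m`), then `dist(m, y) > dist(m, x)`. -/
theorem branch_distance_comparison {W : Type*} [Fintype W] (T : SimpleGraph W)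
    (hT : T.IsTree) (m c : W) (r : ℕ) (x y : W)
    (hxm : x ≠ m) (hym : y ≠ m)
    (hsep : ∀ p : T.Walk x y, m ∈ p.support)
    (hx : T.dist x c ≤ r) (hy : ¬ T.dist y c ≤ r)
    (hc : c = m ∨ ∃ p : T.Walk c y, m ∉ p.support) :
    T.dist m x < T.dist m y := by
  have hconn := hT.isConnected
  push_neg at hy
  rcases hc with rfl | ⟨p0, hp0⟩
  · calc T.dist c x ≤ r := by rwa [SimpleGraph.dist_comm] at hx
      _ < T.dist y c := hy
      _ = T.dist c y := SimpleGraph.dist_comm ..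
  · -- m separates x from c
    have hsepxc : ∀ q : T.Walk x c, m ∈ q.support := by
      intro q
      have := hsep (q.append p0)
      rw [SimpleGraph.Walk.mem_support_append_iff] at this
      tauto
    have h1 : T.dist x c = T.dist x m + T.dist m c :=
      dist_eq_of_sep T hconn m x c hsepxc
    have h2 : T.dist c y ≤ T.dist c m + T.dist m y := hconn.dist_triangle
    have hxm' : T.dist m x = T.dist x m := SimpleGraph.dist_comm ..
    have hmy : T.dist m c = T.dist c m := SimpleGraph.dist_comm ..
    have hy' : r < T.dist c y := by rwa [SimpleGraph.dist_comm] at hy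
    omega
end

section
/- Every graph that is a k-leaf power for some k (equivalently, every graph admitting a radial subtree model) is chordal: it has no induced cycle of length at least 4. -/
open SimpleGraph

/-!
Distances in a tree satisfy the four-point condition
`d(a,b) + d(c,e) ≤ max (d(a,c) + d(b,e)) (d(a,e) + d(b,c))`: split the tree at the first edge
`aa'` of the path from `a` to `b` and induct on `d(a,b)`. In a `k`-leaf power, an induced cycle
`x₀, …, x_{n-1}` with `n ≥ 4` would have `d(xᵢ, xⱼ) ≤ k` exactly for cyclically consecutive
indices. The four-point condition at `x₀, xⱼ, x₁, xⱼ₊₁` makes `d(x₁, xⱼ) - d(x₀, xⱼ)`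
non-increasing for `2 ≤ j ≤ n - 1`, yet it is negative at `j = 2` and positive at `j = n - 1`.
-/

namespace SimpleGraph

variable {W : Type*} {T : SimpleGraph W}

theorem Walk.dist_add_dist_le_length {u v w : W} (p : T.Walk u v) (hw : w ∈ p.support) :
    T.dist u w + T.dist w v ≤ p.length := by
  classical
  rw [← p.take_spec hw, Walk.length_append]
  exact add_le_add (dist_le _) (dist_le _)

theorem Connected.exists_walk_edge_notMem_of_dist_lt (hT : T.Connected) {x a a' : W}
    (h : T.dist x a < T.dist x a') : ∃ p : T.Walk x a, s(a, a') ∉ p.edges := by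
  obtain ⟨p, hp⟩ := hT.exists_walk_length_eq_dist x a
  refine ⟨p, fun he => ?_⟩
  have := p.dist_add_dist_le_length (p.snd_mem_support_of_mem_edges he)
  omega

theorem Connected.exists_adj_dist_add_one_eq (hT : T.Connected) {a b : W} (hab : a ≠ b) :
    ∃ a', T.Adj a a' ∧ T.dist a' b + 1 = T.dist a b := by
  obtain ⟨p, hp⟩ := hT.exists_walk_length_eq_dist a b
  cases p with
  | nil => exact absurd rfl hab
  | @cons _ a' _ hadj q =>
    refine ⟨a', hadj, le_antisymm ?_ ?_⟩
    · simpa [← hp] using dist_le q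
    · have := hT.dist_triangle (u := a) (v := a') (w := b)
      rw [dist_eq_one_iff_adj.mpr hadj] at this
      omega

/-- `x` lies on the side of `a` and `y` on the side of `a'` of the edge `aa'`. -/
theorem IsTree.dist_eq_add_of_adj (hT : T.IsTree) {a a' x y : W} (hadj : T.Adj a a')
    (hx : T.dist x a < T.dist x a') (hy : T.dist y a' < T.dist y a) :
    T.dist x y = T.dist x a + T.dist a y := by
  obtain ⟨p, hp⟩ := hT.1.exists_walk_edge_notMem_of_dist_lt hx
  obtain ⟨q, hq⟩ := hT.1.exists_walk_edge_notMem_of_dist_lt hy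
  rw [Sym2.eq_swap] at hq
  obtain ⟨w, hw⟩ := hT.1.exists_walk_length_eq_dist x y
  have hbridge : ∀ r : T.Walk a a', s(a, a') ∈ r.edges := isBridge_iff_forall_walk_mem_edges.mp
    (isAcyclic_iff_forall_adj_isBridge.mp hT.2 hadj)
  have hw_edge : s(a, a') ∈ w.edges := by
    have := hbridge (p.reverse.append (w.append q))
    simp only [Walk.edges_append, Walk.edges_reverse, List.mem_append, List.mem_reverse] at this
    tauto
  have := w.dist_add_dist_le_length (w.fst_mem_support_of_mem_edges hw_edge)
  have := hT.1.dist_triangle (u := x) (v := a) (w := y)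
  omega

end SimpleGraph

def FourPointCondition {α : Type*} (d : α → α → ℕ) : Prop :=
  ∀ a b c e, d a b + d c e ≤ max (d a c + d b e) (d a e + d b c)

theorem SimpleGraph.IsTree.fourPointCondition_dist {W : Type*} {T : SimpleGraph W}
    (hT : T.IsTree) : FourPointCondition T.dist := by
  intro a b c e
  induction hab : T.dist a b using Nat.strong_induction_on generalizing a with
  | _ n ih =>
  have hcomm : ∀ x y, T.dist x y = T.dist y x := fun _ _ => dist_comm
  by_cases hab' : a = b
  · subst hab'
    have := hT.1.dist_triangle (u := c) (v := a) (w := e)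
    rw [dist_self] at hab
    grind
  obtain ⟨a', hadj, ha'⟩ := hT.1.exists_adj_dist_add_one_eq hab'
  have hb : T.dist b a' < T.dist b a := by rw [hcomm b, hcomm b]; omega
  -- Either `c` or `e` is on the side of `a`, and then the path from it to `b` passes through `a`,
  -- or both are on the side of `a'`, and the induction hypothesis at `a'` applies.
  rcases (hT.dist_ne_of_adj c hadj).lt_or_gt with hc | hc
  · have := hT.dist_eq_add_of_adj hadj hc hb
    have := hT.1.dist_triangle (u := c) (v := a) (w := e)
    grind
  rcases (hT.dist_ne_of_adj e hadj).lt_or_gt with he | he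
  · have := hT.dist_eq_add_of_adj hadj he hb
    have := hT.1.dist_triangle (u := c) (v := a) (w := e)
    grind
  have := hT.dist_eq_dist_add_one_of_adj c hadj
  have := hT.dist_eq_dist_add_one_of_adj e hadj
  have := ih _ (by omega) a' rfl
  grind

theorem SimpleGraph.cycleGraph_adj_mk_iff {n i j : ℕ} (hn : 2 ≤ n) (hi : i < n) (hj : j < n) :
    (cycleGraph n).Adj ⟨i, hi⟩ ⟨j, hj⟩ ↔
      i + 1 = j ∨ j + 1 = i ∨ (i = 0 ∧ j + 1 = n) ∨ (j = 0 ∧ i + 1 = n) := by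
  have hmod : ∀ m, m < 2 * n → (m % n = 1 ↔ m = 1 ∨ m = n + 1) := by
    intro m hm
    rcases lt_or_ge m n with hlt | hge
    · rw [Nat.mod_eq_of_lt hlt]; omega
    · rw [Nat.mod_eq_sub_mod hge, Nat.mod_eq_of_lt (by omega)]; omega
  rw [cycleGraph_adj', Fin.sub_def, Fin.sub_def]
  dsimp only
  rw [hmod _ (by omega), hmod _ (by omega)]
  omega

namespace FourPointCondition

variable {α : Type*} {d : α → α → ℕ}

theorem false_of_le_iff_cycle_adj (hd : FourPointCondition d) (hcomm : ∀ a b, d a b = d b a)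
    (k : ℕ) {n : ℕ} (hn : 4 ≤ n) (x : ℕ → α)
    (hx : ∀ i j, i < n → j < n → i ≠ j →
      (d (x i) (x j) ≤ k ↔ i + 1 = j ∨ j + 1 = i ∨ (i = 0 ∧ j + 1 = n) ∨ (j = 0 ∧ i + 1 = n))) :
    False := by
  have step : ∀ j, 2 ≤ j → j + 1 < n →
      d (x 0) (x j) + d (x 1) (x (j + 1)) ≤ d (x 0) (x (j + 1)) + d (x 1) (x j) := by
    intro j hj hjn
    have := hd (x 0) (x j) (x 1) (x (j + 1))
    have := (hx 0 1 (by omega) (by omega) (by omega)).mpr (by omega)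
    have := (hx j (j + 1) (by omega) (by omega) (by omega)).mpr (by omega)
    have := (hx 0 j (by omega) (by omega) (by omega)).not.mpr (by omega)
    have := (hx 1 (j + 1) (by omega) (by omega) (by omega)).not.mpr (by omega)
    have := hcomm (x j) (x 1)
    omega
  have chain : ∀ j, 2 ≤ j → j < n →
      d (x 0) (x 2) + d (x 1) (x j) ≤ d (x 0) (x j) + d (x 1) (x 2) := by
    intro j hj
    induction j, hj using Nat.le_induction with
    | base => intro; rfl
    | succ j hj ih =>
      intro hjn
      have := step j hj hjn
      have := ih (by omega)
      omega
  have := chain (n - 1) (by omega) (by omega)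
  have := (hx 0 2 (by omega) (by omega) (by omega)).not.mpr (by omega)
  have := (hx 1 (n - 1) (by omega) (by omega) (by omega)).not.mpr (by omega)
  have := (hx 0 (n - 1) (by omega) (by omega) (by omega)).mpr (by omega)
  have := (hx 1 2 (by omega) (by omega) (by omega)).mpr (by omega)
  omega

theorem isEmpty_cycleGraph_embedding {V : Type*} {G : SimpleGraph V} {d : V → V → ℕ}
    (hd : FourPointCondition d) (hcomm : ∀ u v, d u v = d v u) {k : ℕ}
    (hG : ∀ u v, u ≠ v → (G.Adj u v ↔ d u v ≤ k)) {n : ℕ} (hn : 4 ≤ n) :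
    IsEmpty (cycleGraph n ↪g G) := by
  refine ⟨fun f => hd.false_of_le_iff_cycle_adj hcomm k hn
    (fun i => f ⟨i % n, Nat.mod_lt _ (by omega)⟩) fun i j hi hj hij => ?_⟩
  simp only [Nat.mod_eq_of_lt hi, Nat.mod_eq_of_lt hj]
  rw [← hG _ _ (f.injective.ne (Fin.ne_of_val_ne hij)), f.map_adj_iff,
    cycleGraph_adj_mk_iff (by omega)]

end FourPointCondition

theorem leafPower_chordal_general {V : Type*} (G : SimpleGraph V) (k : ℕ)
    (h : ∃ (W : Type) (_ : Fintype W) (T : SimpleGraph W) (τ : V → W), IsLeafRoot G T τ k) :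
    ∀ n : ℕ, 4 ≤ n → IsEmpty (SimpleGraph.cycleGraph n ↪g G) := by
  obtain ⟨W, -, T, τ, hT, -, -, -, hdist⟩ := h
  intro n hn
  exact FourPointCondition.isEmpty_cycleGraph_embedding
    (fun a b c e => hT.fourPointCondition_dist (τ a) (τ b) (τ c) (τ e))
    (fun _ _ => dist_comm) hdist hn

/-- Every `k`-leaf power is chordal: it contains no induced cycle of length at least 4. -/
theorem leafPower_chordal {V : Type*} [Fintype V] (G : SimpleGraph V) (k : ℕ)
    (h : ∃ (W : Type) (_ : Fintype W) (T : SimpleGraph W) (τ : V → W), IsLeafRoot G T τ k) :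
    ∀ n : ℕ, 4 ≤ n → IsEmpty (SimpleGraph.cycleGraph n ↪g G) :=
  leafPower_chordal_general G k h
end

section
/- For every n ≥ 3, the graph R_n is a rooted directed path graph: it admits an intersection model of directed paths in an arborescence. Concretely, taking the rooted caterpillar with spine x_1,…,x_n (rooted at x_1) and a leaf y_i attached to each x_i, assigning a_i the path from x_1 to y_i, b_i the path from x_{i-1} to y_i (b_1 from x_1 to y_1), c_i the path from x_i to y_i, and d_i the single node y_i, yields an intersection model of R_n. -/
open SimpleGraph

/-- The clique `C_i = {a_i, b_i, c_i, d_i}` of `R_n` (vertex `(k, i)` is `a_i, b_i, c_i, d_i`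
for `k = 0, 1, 2, 3` respectively; indices are 0-based). -/
def Rclique (n : ℕ) (i : Fin n) : Set (Fin 4 × Fin n) := {p | p.2 = i}

/-- The clique `C'_i = {a_j : i ≤ j ≤ n-1} ∪ {b_i, b_{i+1}, c_i}` of `R_n` (0-based). -/
def Rclique' (n : ℕ) (i : ℕ) : Set (Fin 4 × Fin n) :=
  {p | (p.1 = 0 ∧ i ≤ (p.2 : ℕ)) ∨ (p.1 = 1 ∧ ((p.2 : ℕ) = i ∨ (p.2 : ℕ) = i + 1)) ∨
    (p.1 = 2 ∧ (p.2 : ℕ) = i)}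

/-- The graph `R_n`: two distinct vertices are adjacent iff they lie in a common clique
from the family `{C_i : i < n} ∪ {C'_i : i < n - 1}`. -/
def Rgraph (n : ℕ) : SimpleGraph (Fin 4 × Fin n) :=
  SimpleGraph.fromRel (fun u v =>
    (∃ i : Fin n, u ∈ Rclique n i ∧ v ∈ Rclique n i) ∨
    (∃ i : ℕ, i + 1 < n ∧ u ∈ Rclique' n i ∧ v ∈ Rclique' n i))

/-- The caterpillar tree: spine nodes `inl 0, …, inl (n-1)` and a leaf `inr i` attached
to each spine node `inl i`. -/
def caterpillar (n : ℕ) : SimpleGraph (Fin n ⊕ Fin n) :=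
  SimpleGraph.fromRel (fun p q =>
    (∃ i j : Fin n, p = Sum.inl i ∧ q = Sum.inl j ∧ (j : ℕ) = (i : ℕ) + 1) ∨
    (∃ i : Fin n, p = Sum.inl i ∧ q = Sum.inr i))

/-- The ancestor relation on the caterpillar rooted at `inl 0`: edges are directed away
from the root, and `anc p q` means the directed path from the root to `q` passes `p`. -/
def caterpillarAnc (n : ℕ) : (Fin n ⊕ Fin n) → (Fin n ⊕ Fin n) → Prop :=
  fun p q => match p, q with
    | Sum.inl i, Sum.inl j => i ≤ j
    | Sum.inl i, Sum.inr j => i ≤ j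
    | Sum.inr i, Sum.inl _ => False
    | Sum.inr i, Sum.inr j => i = j

/-- The directed path in the caterpillar assigned to each vertex of `R_n`:
`a_i ↦` path from `x_0` to `y_i`; `b_i ↦` path from `x_{i-1}` to `y_i` (from `x_0` if `i = 0`);
`c_i ↦` path from `x_i` to `y_i`; `d_i ↦` the single node `y_i`. -/
def pathSet (n : ℕ) : Fin 4 × Fin n → Set (Fin n ⊕ Fin n) :=
  fun p => match p.1 with
    | 0 => {z | (∃ j : Fin n, j ≤ p.2 ∧ z = Sum.inl j) ∨ z = Sum.inr p.2}
    | 1 => {z | (∃ j : Fin n, ((j : ℕ) = (p.2 : ℕ) ∨ (j : ℕ) + 1 = (p.2 : ℕ)) ∧ z = Sum.inl j) ∨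
        z = Sum.inr p.2}
    | 2 => {z | z = Sum.inl p.2 ∨ z = Sum.inr p.2}
    | _ => {z | z = Sum.inr p.2}


/-!
The model is the clique tree of `R_n`: the leaf `y_i` carries the clique `C_i` and the spine
node `x_m` carries `C'_m`, and the path assigned to a vertex is exactly the set of nodes whose
clique contains it. Two paths therefore meet iff their vertices share a clique, i.e. are adjacent.
The clique `C'_{n-1} = {a_{n-1}, b_{n-1}, c_{n-1}}` carried by `x_{n-1}` is not in the family
defining `R_n`, but it lies inside `C_{n-1}`.
-/

namespace SimpleGraph

variable {V : Type*} {G : SimpleGraph V}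

/-- On a cycle, a vertex of maximal height would have two distinct neighbours of no greater
height. -/
theorem isAcyclic_of_lower_neighbor_unique (h : V → ℕ)
    (hlow : ∀ ⦃v u w⦄, G.Adj v u → G.Adj v w → h u ≤ h v → h w ≤ h v → u = w) :
    G.IsAcyclic := by
  classical
  intro v c hc
  obtain ⟨u, hu, hmax⟩ := c.support.toFinset.exists_max_image h ⟨v, by simp⟩
  rw [List.mem_toFinset] at hu
  have hcycle := hc.rotate hu
  have hnil := hcycle.not_nil
  have below : ∀ k, h ((c.rotate u hu).getVert k) ≤ h u := fun k =>
    hmax _ (List.mem_toFinset.2 ((c.mem_support_rotate_iff u hu).1 (Walk.getVert_mem_support _ k)))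
  exact hcycle.snd_ne_penultimate
    (hlow (Walk.adj_snd hnil) (Walk.adj_penultimate hnil).symm (below 1) (below _))

theorem induce_connected_of_descent {s : Set V} {c : V} (hc : c ∈ s) (f : V → ℕ)
    (hdesc : ∀ v ∈ s, v ≠ c → ∃ w ∈ s, G.Adj v w ∧ f w < f v) : (G.induce s).Connected := by
  rw [connected_iff_exists_forall_reachable]
  refine ⟨⟨c, hc⟩, ?_⟩
  rintro ⟨v, hv⟩
  induction hfv : f v using Nat.strong_induction_on generalizing v with
  | _ m ih =>
    by_cases hvc : v = c
    · subst hvc; rfl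
    obtain ⟨w, hw, hvw, hlt⟩ := hdesc v hv hvc
    have hwv : (G.induce s).Adj ⟨w, hw⟩ ⟨v, hv⟩ := hvw.symm
    exact (ih _ (hfv ▸ hlt) w hw rfl).trans hwv.reachable

end SimpleGraph

section Caterpillar

variable {n : ℕ}

@[simp] lemma caterpillar_adj_inl_inl {i j : Fin n} :
    (caterpillar n).Adj (.inl i) (.inl j) ↔ (j : ℕ) = i + 1 ∨ (i : ℕ) = j + 1 := by
  simp [caterpillar]; omega

@[simp] lemma caterpillar_adj_inl_inr {i j : Fin n} :
    (caterpillar n).Adj (.inl i) (.inr j) ↔ i = j := by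
  simp [caterpillar]; grind

@[simp] lemma caterpillar_adj_inr_inl {i j : Fin n} :
    (caterpillar n).Adj (.inr i) (.inl j) ↔ i = j := by
  rw [adj_comm, caterpillar_adj_inl_inr, eq_comm]

@[simp] lemma caterpillar_not_adj_inr_inr {i j : Fin n} :
    ¬ (caterpillar n).Adj (.inr i) (.inr j) := by
  simp [caterpillar]

/-- Spine nodes get even heights and leaves odd ones, so that every node other than the root
`x_0` has exactly one neighbour below it. -/
def caterpillarHeight : Fin n ⊕ Fin n → ℕ := Sum.elim (fun i => 2 * i) (fun i => 2 * i + 1)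

lemma caterpillar_isAcyclic : (caterpillar n).IsAcyclic := by
  refine isAcyclic_of_lower_neighbor_unique caterpillarHeight ?_
  rintro (v | v) (u | u) (w | w) <;> simp [caterpillarHeight, Fin.ext_iff] <;> omega

/-- The directed path from the spine node `x_lo` to the leaf `y_i`; it is `{y_i}` when `i < lo`. -/
def caterpillarPath (n lo : ℕ) (i : Fin n) : Set (Fin n ⊕ Fin n) :=
  {z | (∃ j : Fin n, lo ≤ j ∧ j ≤ i ∧ z = .inl j) ∨ z = .inr i}

lemma caterpillarPath_connected (lo : ℕ) (i : Fin n) :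
    ((caterpillar n).induce (caterpillarPath n lo i)).Connected := by
  -- descend along the distance to the leaf `y_i`
  refine induce_connected_of_descent (c := .inr i) (Or.inr rfl)
    (Sum.elim (fun j => i + 1 - j) fun _ => 0) ?_
  rintro v (⟨j, hlo, hi, rfl⟩ | rfl) hv
  · rcases hi.lt_or_eq with hlt | rfl
    · refine ⟨.inl ⟨j + 1, by omega⟩, Or.inl ⟨_, by simp; omega, Fin.le_def.2 (by simpa), rfl⟩,
        by simp, by simp; omega⟩
    · exact ⟨.inr j, Or.inr rfl, by simp, by simp⟩
  · exact absurd rfl hv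

lemma caterpillarPath_isChain (lo : ℕ) (i : Fin n) :
    IsChain (caterpillarAnc n) (caterpillarPath n lo i) := by
  rintro x (⟨a, -, ha, rfl⟩ | rfl) y (⟨b, -, hb, rfl⟩ | rfl) hxy
  · exact le_total a b
  · exact Or.inl ha
  · exact Or.inr hb
  · exact absurd rfl hxy

lemma caterpillar_connected (hn : 0 < n) : (caterpillar n).Connected := by
  rw [connected_iff_exists_forall_reachable]
  refine ⟨.inl ⟨0, hn⟩, fun z => ?_⟩
  obtain ⟨i, hz⟩ : ∃ i, z ∈ caterpillarPath n 0 i := by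
    rcases z with i | i
    · exact ⟨i, Or.inl ⟨i, by simp, le_rfl, rfl⟩⟩
    · exact ⟨i, Or.inr rfl⟩
  have hroot : (.inl ⟨0, hn⟩ : Fin n ⊕ Fin n) ∈ caterpillarPath n 0 i :=
    Or.inl ⟨_, le_rfl, Fin.le_def.2 (Nat.zero_le _), rfl⟩
  exact ((caterpillarPath_connected 0 i).preconnected ⟨_, hroot⟩ ⟨z, hz⟩).map
    (Embedding.induce _).toHom

lemma caterpillar_isTree (hn : 0 < n) : (caterpillar n).IsTree :=
  ⟨caterpillar_connected hn, caterpillar_isAcyclic⟩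

lemma pathSet_eq_caterpillarPath (k : Fin 4) (i : Fin n) :
    pathSet n (k, i) = caterpillarPath n (![0, (i : ℕ) - 1, i, i + 1] k) i := by
  ext z
  fin_cases k <;> rcases z with j | j <;> simp [pathSet, caterpillarPath] <;> omega

def caterpillarClique (n : ℕ) : Fin n ⊕ Fin n → Set (Fin 4 × Fin n) :=
  Sum.elim (fun m => Rclique' n m) (Rclique n)

lemma mem_pathSet_iff {v : Fin 4 × Fin n} {z : Fin n ⊕ Fin n} :
    z ∈ pathSet n v ↔ v ∈ caterpillarClique n z := by
  obtain ⟨k, i⟩ := v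
  fin_cases k <;> rcases z with j | j <;>
    simp [pathSet, caterpillarClique, Rclique, Rclique'] <;> omega

lemma Rclique'_subset_Rclique {m : Fin n} (hm : n ≤ m + 1) : Rclique' n m ⊆ Rclique n m := by
  rintro ⟨k, i⟩ hv
  simp only [Rclique', Rclique, Set.mem_ofPred_eq, Fin.ext_iff] at hv ⊢
  omega

lemma Rgraph_adj_iff {u v : Fin 4 × Fin n} : (Rgraph n).Adj u v ↔
    u ≠ v ∧ ∃ z, u ∈ caterpillarClique n z ∧ v ∈ caterpillarClique n z := by
  have common_clique : ∀ u v : Fin 4 × Fin n,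
      ((∃ i, u ∈ Rclique n i ∧ v ∈ Rclique n i) ∨
        ∃ m, m + 1 < n ∧ u ∈ Rclique' n m ∧ v ∈ Rclique' n m) ↔
      ∃ z, u ∈ caterpillarClique n z ∧ v ∈ caterpillarClique n z := by
    intro u v
    constructor
    · rintro (⟨i, hu, hv⟩ | ⟨m, hm, hu, hv⟩)
      exacts [⟨.inr i, hu, hv⟩, ⟨.inl ⟨m, by omega⟩, hu, hv⟩]
    · rintro ⟨m | i, hu, hv⟩
      · by_cases hm : (m : ℕ) + 1 < n
        · exact Or.inr ⟨m, hm, hu, hv⟩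
        · have hsub := Rclique'_subset_Rclique (not_lt.1 hm)
          exact Or.inl ⟨m, hsub hu, hsub hv⟩
      · exact Or.inl ⟨i, hu, hv⟩
  simp only [Rgraph, fromRel_adj, common_clique]
  exact and_congr_right fun _ => or_iff_left_of_imp fun ⟨z, hv, hu⟩ => ⟨z, hu, hv⟩

end Caterpillar

/-- `R_n` is a rooted directed path graph: the explicit assignment of directed paths in the
caterpillar arborescence rooted at `x_0` (each assigned set is connected in the caterpillar
and is a chain under the ancestor relation, hence a directed path) is an intersection
model of `R_n`. -/
theorem Rgraph_rooted_directed_path (n : ℕ) (hn : 3 ≤ n) :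
    (caterpillar n).IsTree ∧
    (∀ v : Fin 4 × Fin n,
      ((caterpillar n).induce (pathSet n v)).Connected ∧ IsChain (caterpillarAnc n) (pathSet n v)) ∧
    (∀ u v : Fin 4 × Fin n, u ≠ v →
      ((pathSet n u ∩ pathSet n v).Nonempty ↔ (Rgraph n).Adj u v)) := by
  refine ⟨caterpillar_isTree (by omega), fun ⟨k, i⟩ => ?_, fun u v huv => ?_⟩
  · rw [pathSet_eq_caterpillarPath]
    exact ⟨caterpillarPath_connected _ i, caterpillarPath_isChain _ i⟩
  · simp only [Rgraph_adj_iff, Set.Nonempty, Set.mem_inter_iff, mem_pathSet_iff, ne_eq, huv,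
      not_false_eq_true, true_and]
end

section
/- For every n ≥ 3 and every 1 ≤ i ≤ n, the clique C_i = {a_i, b_i, c_i, d_i} is not a separator of R_n: the graph R_n − C_i obtained by deleting C_i has the property that any two remaining vertices are connected by a path avoiding C_i. -/
open SimpleGraph

lemma adj_col {n : ℕ} {j : Fin n} {k k' : Fin 4} (h : k ≠ k') :
    (Rgraph n).Adj (k, j) (k', j) :=
  ⟨by simp [Prod.ext_iff, h], Or.inl (Or.inl ⟨j, rfl, rfl⟩)⟩

lemma adj_a {n : ℕ} (hn : 3 ≤ n) {j j' : Fin n} (h : j ≠ j') :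
    (Rgraph n).Adj (0, j) (0, j') :=
  ⟨by simp [Prod.ext_iff, h], Or.inl (Or.inr ⟨0, by omega,
    Or.inl ⟨rfl, Nat.zero_le _⟩, Or.inl ⟨rfl, Nat.zero_le _⟩⟩)⟩

lemma walk_avoid {n : ℕ} (hn : 3 ≤ n) (i : Fin n) (u v : Fin 4 × Fin n)
    (hu : u.2 ≠ i) (hv : v.2 ≠ i) :
    ∃ p : (Rgraph n).Walk u v, ∀ w ∈ p.support, w.2 ≠ i := by
  obtain ⟨k, j⟩ := u
  obtain ⟨k', j'⟩ := v
  simp only at hu hv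
  by_cases hjj : j = j'
  · subst hjj
    by_cases hkk : k = k'
    · subst hkk; exact ⟨Walk.nil, by simp [hu]⟩
    · exact ⟨(adj_col hkk).toWalk, by simp [hu]⟩
  · by_cases hk : k = 0 <;> by_cases hk' : k' = 0
    · subst hk; subst hk'
      exact ⟨(adj_a hn hjj).toWalk, by simp [hu, hv]⟩
    · subst hk
      exact ⟨Walk.cons (adj_a hn hjj) (adj_col (Ne.symm hk')).toWalk, by simp [hu, hv]⟩
    · subst hk'
      exact ⟨Walk.cons (adj_col hk) (adj_a hn hjj).toWalk, by simp [hu, hv]⟩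
    · exact ⟨Walk.cons (adj_col hk) (Walk.cons (adj_a hn hjj)
        (adj_col (Ne.symm hk')).toWalk), by simp [hu, hv]⟩

lemma reach_induce {V : Type*} {G : SimpleGraph V} {s : Set V} :
    ∀ {u v : V} (p : G.Walk u v) (h : ∀ w ∈ p.support, w ∈ s),
      (G.induce s).Reachable ⟨u, h u p.start_mem_support⟩ ⟨v, h v p.end_mem_support⟩ := by
  intro u v p
  induction p with
  | nil => intro h; rfl
  | cons a q ih =>
    intro h
    exact (Adj.reachable (by exact a : (G.induce s).Adj ⟨_, _⟩ ⟨_, _⟩)).trans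
      (ih fun w hw => h w (by simp [hw]))

/-- No clique `C_i` is a separator of `R_n`: deleting `C_i` leaves a connected graph, and any
two vertices outside `C_i` are joined by a walk avoiding `C_i`. -/
theorem Rgraph_clique_not_separator (n : ℕ) (hn : 3 ≤ n) (i : Fin n) :
    ((Rgraph n).induce {p : Fin 4 × Fin n | p ∉ Rclique n i}).Connected ∧
    ∀ u v : Fin 4 × Fin n, u ∉ Rclique n i → v ∉ Rclique n i →
      ∃ p : (Rgraph n).Walk u v, ∀ w ∈ p.support, w ∉ Rclique n i := by
  have hne : Nonempty ↑{p : Fin 4 × Fin n | p ∉ Rclique n i} := by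
    refine ⟨⟨(0, if (i : ℕ) = 0 then ⟨1, by omega⟩ else ⟨0, by omega⟩), ?_⟩⟩
    simp only [Set.mem_setOf_eq, Rclique]
    split <;> rename_i h <;> intro hc <;>
      · replace hc : _ = i := hc
        apply_fun Fin.val at hc
        simp at hc; omega
  constructor
  · apply Connected.mk
    rintro ⟨u, hu⟩ ⟨v, hv⟩
    obtain ⟨p, hp⟩ := walk_avoid hn i u v hu hv
    exact reach_induce p hp
  · intro u v hu hv
    exact walk_avoid hn i u v hu hv
end
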